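/- arXiv:1302.0744 — 4 statements merged into one kernel-verified Lean document; each statement's English description precedes it below -/
import Mathlib

section
/- (Lemma 1) Let q be a prime power, F_q a finite field with q elements, and F an extension field of F_q of degree m. Let α, n, J, J̃ be positive integers with J̃ ≤ J ≤ m, and let G be a J × (nα) matrix over F_q with rank(G) ≥ J̃, its columns grouped into n thick columns of width α. Let ρ be the smallest integer such that every subset S of {1,…,n} with |S| = ρ satisfies rank(G|_S) ≥ J̃. Let θ_1,…,θ_J ∈ F be linearly independent over F_q, and let C ⊆ F^{nα} be the set of all vectors (f(θ_1),…,f(θ_J))·G, where f ranges over the linearized polynomials of q-degree at most J̃−1 over F. Then the map f ↦ (f(θ_1),…,f(θ_J))·G is injective (so |C| = q^{m·J̃}), and the minimum thick Hamming distance of C, viewed as a length-n code over the alphabet F^α, is exactly D_min = n − ρ + 1. -/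
/-- The rank of the submatrix of `G` formed by the thick columns indexed by `S`:
columns of `G` are indexed by pairs `(j, a)` with `j` the thick-column index and
`a` the position inside the thick column (of width `α`). -/
noncomputable def thickRank {K : Type*} [Field K] {R C : Type*} [Fintype C] [DecidableEq C]
    {α : ℕ} (G : Matrix R (C × Fin α) K) (S : Finset C) : ℕ :=
  (G.submatrix id (fun p : {p : C × Fin α // p.1 ∈ S} => (p : C × Fin α))).rank

/- The thick Hamming distance between two words of `F^{nα}`, viewed as length-`n` words
over the alphabet `F^α`: the number of thick positions `j` at which their blocks differ. -/
open scoped Classical in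
noncomputable def thickDist {F C : Type*} [Fintype C] {α : ℕ}
    (v w : C × Fin α → F) : ℕ :=
  (Finset.univ.filter fun j : C => ∃ a, v (j, a) ≠ w (j, a)).card

/-!
Since `F_q` is fixed by `x ↦ x ^ q`, a linearized polynomial `f` is `F_q`-linear, so the `p`-th
coordinate of the codeword is `f (ηₚ)` with `ηₚ = ∑ᵢ Gᵢₚ θᵢ`; as the `θᵢ` are independent, the
`ηₚ` of a set `S` of thick columns span a space of dimension `rank (G|_S)`. A nonzero `f` of
`q`-degree `< J̃` has at most `q ^ (J̃ - 1)` roots, so its kernel has dimension `< J̃`: it cannot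
vanish on `ρ` thick columns, which gives distance `≥ n - ρ + 1`. Conversely, by minimality of `ρ`
some `ρ - 1` thick columns span a space of dimension `< J̃`, and a nonzero `f` vanishing on it
exists because that is fewer linear conditions than the `J̃` unknown coefficients; its codeword
has weight exactly `n - ρ + 1`.
-/

open Module Polynomial Submodule FiniteField Matrix

section Linearized

variable (K : Type*) {L : Type*} [Field K] [Fintype K] [Field L] [Algebra K L] {t : ℕ}

noncomputable def linearizedMap (u : Fin t → L) : L →ₗ[K] L :=
  ∑ l, u l • ((frobeniusAlgHom K L) ^ (l : ℕ)).toLinearMap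

theorem linearizedMap_apply (u : Fin t → L) (x : L) :
    linearizedMap K u x = ∑ l, u l * x ^ Fintype.card K ^ (l : ℕ) := by
  simp [linearizedMap, AlgHom.coe_pow, coe_frobeniusAlgHom, pow_iterate]

theorem linearizedMap_sub (u v : Fin t → L) :
    linearizedMap K (u - v) = linearizedMap K u - linearizedMap K v := by
  ext x
  simp [linearizedMap_apply, sub_mul]

-- The ordinary polynomial `∑ uₗ X ^ q ^ l` is nonzero of degree at most `q ^ (t - 1)`.
theorem card_le_of_forall_linearizedMap_eq_zero {u : Fin t → L} (hu : u ≠ 0) (T : Finset L)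
    (hT : ∀ x ∈ T, linearizedMap K u x = 0) : T.card ≤ Fintype.card K ^ (t - 1) := by
  set q := Fintype.card K
  set P : L[X] := ∑ l, C (u l) * X ^ q ^ (l : ℕ)
  have hq : 1 < q := Fintype.one_lt_card
  obtain ⟨l₀, hl₀⟩ : ∃ l₀, u l₀ ≠ 0 := Function.ne_iff.mp hu
  have hcoeff : P.coeff (q ^ (l₀ : ℕ)) = u l₀ := by
    simp only [P, finsetSum_coeff, coeff_C_mul_X_pow, (Nat.pow_right_injective hq).eq_iff,
      Fin.val_inj, Finset.sum_ite_eq, Finset.mem_univ, if_true]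
  have hP : P ≠ 0 := fun h => hl₀ (by rw [← hcoeff, h, coeff_zero])
  have hdeg : P.natDegree ≤ q ^ (t - 1) :=
    natDegree_sum_le_of_forall_le _ _ fun l _ =>
      (natDegree_C_mul_X_pow_le _ _).trans (Nat.pow_le_pow_right hq.le (by omega))
  refine (card_le_degree_of_subset_roots fun x hx => ?_).trans hdeg
  rw [mem_roots hP, IsRoot, ← hT x hx, linearizedMap_apply]
  simp [P, q, eval_finsetSum]

theorem finrank_lt_of_le_ker_linearizedMap {u : Fin t → L} (hu : u ≠ 0) (W : Submodule K L)
    [FiniteDimensional K W] (hW : W ≤ LinearMap.ker (linearizedMap K u)) : finrank K W < t := by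
  have : Finite W := Module.finite_of_finite K
  have : Fintype W := Fintype.ofFinite W
  have hcard : Fintype.card K ^ finrank K W ≤ Fintype.card K ^ (t - 1) := by
    rw [← card_eq_pow_finrank, ← Finset.card_univ,
      ← Finset.card_map (Function.Embedding.subtype (· ∈ W))]
    exact card_le_of_forall_linearizedMap_eq_zero K hu _ fun x hx => by
      obtain ⟨w, -, rfl⟩ := Finset.mem_map.mp hx
      exact hW w.2
  obtain ⟨l₀, -⟩ := Function.ne_iff.mp hu
  have := (Nat.pow_le_pow_iff_right Fintype.one_lt_card).mp hcard
  have := l₀.pos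
  omega

theorem exists_ne_zero_le_ker_linearizedMap (W : Submodule K L) [FiniteDimensional K W]
    (hW : finrank K W < t) :
    ∃ u : Fin t → L, u ≠ 0 ∧ W ≤ LinearMap.ker (linearizedMap K u) := by
  set b := finBasis K W
  set M : Matrix (Fin (finrank K W)) (Fin t) L := fun i l => (b i : L) ^ Fintype.card K ^ (l : ℕ)
  have hker : LinearMap.ker M.mulVecLin ≠ ⊥ :=
    LinearMap.ker_ne_bot_of_finrank_lt (by simpa using hW)
  obtain ⟨u, hMu, hu⟩ := (Submodule.ne_bot_iff _).mp hker
  refine ⟨u, hu, fun x hx => ?_⟩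
  have hb : (linearizedMap K u).comp W.subtype = 0 := b.ext fun i => by
    have := congrFun (show M *ᵥ u = 0 from hMu) i
    simpa [linearizedMap_apply, M, Matrix.mulVec, dotProduct, mul_comm] using this
  exact LinearMap.congr_fun hb ⟨x, hx⟩

end Linearized

section ThickColumns

variable {K : Type*} [Field K] {R C : Type*} [Fintype C] [DecidableEq C] {α : ℕ}

theorem thickRank_eq_finrank_span (G : Matrix R (C × Fin α) K) (S : Finset C) :
    thickRank G S = finrank K (span K (G.col '' (Prod.fst ⁻¹' S))) := by
  have hcols : Set.range (G.submatrix id fun p : {p : C × Fin α // p.1 ∈ S} => p.1).col =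
      G.col '' (Prod.fst ⁻¹' S) := by
    ext x
    exact ⟨fun ⟨p, hp⟩ => ⟨p.1, p.2, hp⟩, fun ⟨p, hp, hx⟩ => ⟨⟨p, hp⟩, hx⟩⟩
  rw [thickRank, rank_eq_finrank_span_cols, hcols]

theorem thickRank_empty (G : Matrix R (C × Fin α) K) : thickRank G ∅ = 0 := by
  rw [thickRank_eq_finrank_span, Finset.coe_empty, Set.preimage_empty, Set.image_empty, span_empty,
    finrank_bot]

theorem thickRank_univ (G : Matrix R (C × Fin α) K) : thickRank G Finset.univ = G.rank := by
  rw [thickRank_eq_finrank_span, rank_eq_finrank_span_cols, Finset.coe_univ, Set.preimage_univ,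
    Set.image_univ]

theorem thickDist_eq_card_sub {F : Type*} (v w : C × Fin α → F) (Z : Finset C)
    (hZ : ∀ j, j ∈ Z ↔ ∀ a, v (j, a) = w (j, a)) :
    thickDist v w = Fintype.card C - Z.card := by
  classical
  rw [thickDist, ← Finset.card_compl]
  congr 1
  ext j
  simp [hZ]

variable {t ρ : ℕ} {G : Matrix R (C × Fin α) K}

theorem pos_of_isLeast_thickRank (ht : 0 < t)
    (hρ : IsLeast {s : ℕ | ∀ S : Finset C, S.card = s → t ≤ thickRank G S} ρ) :
    0 < ρ := by
  by_contra! h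
  have := hρ.1 ∅ (by simp; omega)
  rw [thickRank_empty] at this
  omega

theorem le_card_of_isLeast_thickRank (hG : t ≤ G.rank)
    (hρ : IsLeast {s : ℕ | ∀ S : Finset C, S.card = s → t ≤ thickRank G S} ρ) :
    ρ ≤ Fintype.card C :=
  hρ.2 fun S hS => by rwa [Finset.eq_univ_of_card S hS, thickRank_univ]

theorem finrank_map_linearCombination {L : Type*} [AddCommGroup L] [Module K L] [Fintype R]
    {θ : R → L} (hθ : LinearIndependent K θ) (S : Finset C) :
    finrank K ((span K (G.col '' (Prod.fst ⁻¹' S))).map (Fintype.linearCombination K θ)) =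
      thickRank G S := by
  rw [thickRank_eq_finrank_span]
  exact (equivMapOfInjective _ hθ.fintypeLinearCombination_injective _).finrank_eq.symm

end ThickColumns

section EvalCodeword

variable {K L : Type*} [Field K] [Fintype K] [Field L] [Algebra K L]
  {R C : Type*} [Fintype R] {α t : ℕ} (G : Matrix R (C × Fin α) K) (θ : R → L)

/-- The codeword `(f(θ₁), …, f(θ_J))·G` of the linearized polynomial `f` with coefficients `u`,
written as `f (∑ i, Gᵢₚ • θᵢ)`, which is the same by `K`-linearity of `f` (`evalCodeword_apply`). -/
noncomputable def evalCodeword (u : Fin t → L) (p : C × Fin α) : L :=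
  linearizedMap K u (Fintype.linearCombination K θ (G.col p))

theorem evalCodeword_apply (u : Fin t → L) (p : C × Fin α) :
    evalCodeword G θ u p = ∑ i, G i p • ∑ l, u l * θ i ^ Fintype.card K ^ (l : ℕ) := by
  simp [evalCodeword, Fintype.linearCombination_apply, linearizedMap_apply, Matrix.col]

theorem evalCodeword_sub (u v : Fin t → L) (p : C × Fin α) :
    evalCodeword G θ (u - v) p = evalCodeword G θ u p - evalCodeword G θ v p := by
  simp [evalCodeword, linearizedMap_sub]

variable {G θ}

theorem forall_evalCodeword_eq_zero_iff (u : Fin t → L) (S : Finset C) :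
    (∀ j ∈ S, ∀ a, evalCodeword G θ u (j, a) = 0) ↔
      (span K (G.col '' (Prod.fst ⁻¹' S))).map (Fintype.linearCombination K θ) ≤
        LinearMap.ker (linearizedMap K u) := by
  rw [map_le_iff_le_comap, span_le, Set.image_subset_iff]
  exact ⟨fun h p hp => h p.1 hp p.2, fun h j hj a => h (show (j, a).1 ∈ S from hj)⟩

variable [Fintype C] [DecidableEq C]

theorem thickRank_lt_of_evalCodeword_eq_zero (hθ : LinearIndependent K θ) {u : Fin t → L}
    (hu : u ≠ 0) {S : Finset C} (hS : ∀ j ∈ S, ∀ a, evalCodeword G θ u (j, a) = 0) :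
    thickRank G S < t := by
  rw [← finrank_map_linearCombination hθ]
  exact finrank_lt_of_le_ker_linearizedMap K hu _ ((forall_evalCodeword_eq_zero_iff u S).mp hS)

theorem exists_evalCodeword_eq_zero (hθ : LinearIndependent K θ) {S : Finset C}
    (hS : thickRank G S < t) :
    ∃ u : Fin t → L, u ≠ 0 ∧ ∀ j ∈ S, ∀ a, evalCodeword G θ u (j, a) = 0 := by
  rw [← finrank_map_linearCombination hθ] at hS
  obtain ⟨u, hu, hker⟩ := exists_ne_zero_le_ker_linearizedMap K _ hS
  exact ⟨u, hu, (forall_evalCodeword_eq_zero_iff u S).mpr hker⟩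

theorem thickDist_evalCodeword (u v : Fin t → L) (Z : Finset C)
    (hZ : ∀ j, j ∈ Z ↔ ∀ a, evalCodeword G θ (u - v) (j, a) = 0) :
    thickDist (evalCodeword G θ u) (evalCodeword G θ v) = Fintype.card C - Z.card :=
  thickDist_eq_card_sub _ _ Z fun j => by simp only [hZ, evalCodeword_sub, sub_eq_zero]

variable {ρ : ℕ}

theorem card_lt_of_evalCodeword_eq_zero (hθ : LinearIndependent K θ)
    (hρ : IsLeast {s : ℕ | ∀ S : Finset C, S.card = s → t ≤ thickRank G S} ρ)
    {u : Fin t → L} (hu : u ≠ 0) {Z : Finset C}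
    (hZ : ∀ j ∈ Z, ∀ a, evalCodeword G θ u (j, a) = 0) : Z.card < ρ := by
  by_contra! h
  obtain ⟨S, hSZ, hS⟩ := Finset.exists_subset_card_eq h
  exact (hρ.1 S hS).not_gt
    (thickRank_lt_of_evalCodeword_eq_zero hθ hu fun j hj => hZ j (hSZ hj))

theorem le_thickDist_evalCodeword (hθ : LinearIndependent K θ)
    (hρ : IsLeast {s : ℕ | ∀ S : Finset C, S.card = s → t ≤ thickRank G S} ρ)
    (hρC : ρ ≤ Fintype.card C) {u v : Fin t → L} (huv : u ≠ v) :
    Fintype.card C - ρ + 1 ≤ thickDist (evalCodeword G θ u) (evalCodeword G θ v) := by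
  classical
  set Z := Finset.univ.filter fun j => ∀ a, evalCodeword G θ (u - v) (j, a) = 0
  have hZ : Z.card < ρ := card_lt_of_evalCodeword_eq_zero hθ hρ (sub_ne_zero.mpr huv)
    fun j hj => (Finset.mem_filter.mp hj).2
  rw [thickDist_evalCodeword u v Z fun j => by simp [Z]]
  omega

theorem exists_thickDist_evalCodeword_eq (hθ : LinearIndependent K θ)
    (hρ : IsLeast {s : ℕ | ∀ S : Finset C, S.card = s → t ≤ thickRank G S} ρ)
    (hρ₀ : 0 < ρ) (hρC : ρ ≤ Fintype.card C) :
    ∃ u : Fin t → L, u ≠ 0 ∧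
      thickDist (evalCodeword G θ u) (evalCodeword G θ (0 : Fin t → L)) =
        Fintype.card C - ρ + 1 := by
  classical
  obtain ⟨S₀, hS₀, hrank⟩ : ∃ S₀ : Finset C, S₀.card = ρ - 1 ∧ thickRank G S₀ < t := by
    by_contra! h
    exact absurd (hρ.2 h) (by omega)
  obtain ⟨u, hu, hS₀u⟩ := exists_evalCodeword_eq_zero hθ hrank
  set Z := Finset.univ.filter fun j => ∀ a, evalCodeword G θ u (j, a) = 0
  have hS₀Z : S₀ ⊆ Z := fun j hj => Finset.mem_filter.mpr ⟨Finset.mem_univ j, hS₀u j hj⟩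
  have hZ : Z.card < ρ :=
    card_lt_of_evalCodeword_eq_zero hθ hρ hu fun j hj => (Finset.mem_filter.mp hj).2
  have := Finset.card_le_card hS₀Z
  refine ⟨u, hu, ?_⟩
  rw [thickDist_evalCodeword u 0 Z fun j => by simp [Z]]
  omega

end EvalCodeword

theorem stmt_3_general (q m α n J Jt : ℕ)
    (hJt : 0 < Jt) (hJtJ : Jt ≤ J) (hJm : J ≤ m)
    (F : Type*) [Field F] (Fq : Subfield F) [Fintype Fq]
    (hcard : Fintype.card Fq = q) (hm : Module.finrank Fq F = m)
    (G : Matrix (Fin J) (Fin n × Fin α) Fq) (hG : Jt ≤ G.rank)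
    (ρ : ℕ)
    (hρ : IsLeast {s : ℕ | ∀ S : Finset (Fin n), S.card = s → Jt ≤ thickRank G S} ρ)
    (θ : Fin J → F) (hθ : LinearIndependent Fq θ)
    (enc : (Fin Jt → F) → (Fin n × Fin α → F))
    (henc : ∀ u p, enc u p = ∑ i, (∑ l, u l * θ i ^ q ^ (l : ℕ)) * (G i p : F)) :
    Function.Injective enc
    ∧ (Set.range enc).ncard = q ^ (m * Jt)
    ∧ (∀ u v, u ≠ v → n - ρ + 1 ≤ thickDist (enc u) (enc v))
    ∧ (∃ u v, u ≠ v ∧ thickDist (enc u) (enc v) = n - ρ + 1) := by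
  have : FiniteDimensional Fq F := Module.finite_of_finrank_pos (by omega)
  have : Finite F := Module.finite_of_finite Fq
  have : Fintype F := Fintype.ofFinite F
  obtain rfl : enc = evalCodeword G θ := by
    funext u p
    simp [henc, evalCodeword_apply, hcard, Subfield.smul_def, mul_comm]
  have hρ₀ : 0 < ρ := pos_of_isLeast_thickRank hJt hρ
  have hρn : ρ ≤ Fintype.card (Fin n) := le_card_of_isLeast_thickRank hG hρ
  have hdist : ∀ u v : Fin Jt → F, u ≠ v →
      n - ρ + 1 ≤ thickDist (evalCodeword G θ u) (evalCodeword G θ v) := fun u v huv => by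
    simpa using le_thickDist_evalCodeword hθ hρ hρn huv
  have hinj : Function.Injective (evalCodeword G θ) := fun u v h => by
    by_contra huv
    simpa [h, thickDist] using hdist u v huv
  refine ⟨hinj, ?_, hdist, ?_⟩
  · rw [← Nat.card_coe_set_eq, Nat.card_range_of_injective hinj, Nat.card_eq_fintype_card,
      Fintype.card_fun, card_eq_pow_finrank (K := Fq), hcard, hm, Fintype.card_fin, ← pow_mul]
  · obtain ⟨u, hu, h⟩ := exists_thickDist_evalCodeword_eq hθ hρ hρ₀ hρn
    exact ⟨u, 0, hu, by simpa using h⟩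

/-- **Lemma 1.** Let `q` be a prime power, `Fq` a subfield with `q` elements
of a field `F` with `[F : Fq] = m`, and `α, n, J, J̃` positive integers with `J̃ ≤ J ≤ m`.
Let `G` be a `J × (nα)` matrix over `Fq` of rank at least `J̃`, whose columns are grouped
into `n` thick columns of width `α`, and let `ρ` be the smallest integer such that every set
`S` of `ρ` thick columns satisfies `rank (G|_S) ≥ J̃`.  Let `θ₁, …, θ_J ∈ F` be linearly
independent over `Fq` and let `C` be the code consisting of all vectors
`(f(θ₁), …, f(θ_J))·G`, where `f` ranges over linearized polynomials of `q`-degree at most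
`J̃ - 1` over `F` (encoded by their coefficient vectors `u : Fin J̃ → F`).  Then the encoding
map is injective (so `|C| = q ^ (m J̃)`) and the minimum thick Hamming distance of `C`,
viewed as a length-`n` code over the alphabet `F^α`, is exactly `n - ρ + 1`. -/
theorem stmt_3 (q m α n J Jt : ℕ) (hq : IsPrimePow q)
    (hα : 0 < α) (hn : 0 < n) (hJt : 0 < Jt) (hJtJ : Jt ≤ J) (hJm : J ≤ m)
    (F : Type*) [Field F] (Fq : Subfield F) [Fintype Fq]
    (hcard : Fintype.card Fq = q) (hm : Module.finrank Fq F = m)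
    (G : Matrix (Fin J) (Fin n × Fin α) Fq) (hG : Jt ≤ G.rank)
    (ρ : ℕ)
    (hρ : IsLeast {s : ℕ | ∀ S : Finset (Fin n), S.card = s → Jt ≤ thickRank G S} ρ)
    (θ : Fin J → F) (hθ : LinearIndependent Fq θ)
    (enc : (Fin Jt → F) → (Fin n × Fin α → F))
    (henc : ∀ u p, enc u p = ∑ i, (∑ l, u l * θ i ^ q ^ (l : ℕ)) * (G i p : F)) :
    Function.Injective enc
    ∧ (Set.range enc).ncard = q ^ (m * Jt)
    ∧ (∀ u v, u ≠ v → n - ρ + 1 ≤ thickDist (enc u) (enc v))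
    ∧ (∃ u v, u ≠ v ∧ thickDist (enc u) (enc v) = n - ρ + 1) :=
  stmt_3_general q m α n J Jt hJt hJtJ hJm F Fq hcard hm G hG ρ hρ θ hθ enc henc
end

section
/- Let F_q be a finite field, let n_L, α, t be positive integers, let a_1 ≥ a_2 ≥ … ≥ a_{n_L} ≥ 0 be integers with K_L := P(n_L) ≥ 1, and let B be a K_L × (n_L·α) URA matrix over F_q with profile (a_1,…,a_{n_L}). Let G_BASIC be the (t·K_L) × (t·n_L·α) block-diagonal matrix with t diagonal copies of B, its t·n_L thick columns of width α being those of the copies of B. Then for every 0 ≤ s ≤ t·n_L, the minimum of rank(G_BASIC|_T) over all subsets T of s thick columns equals P(s), where P uses the period-n_L periodic extension of the profile. Equivalently, for every 1 ≤ K ≤ t·K_L, the smallest integer ρ such that every set of ρ thick columns of G_BASIC has rank at least K is ρ = P^{inv}(K). -/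
/-- Partial sums `P(s) = a_1 + … + a_s` of a (0-indexed) sequence `a : ℕ → ℕ`. -/
def Pfun (a : ℕ → ℕ) (s : ℕ) : ℕ := ∑ i ∈ Finset.range s, a i

/-- `Pinv ν` is the smallest integer `s` with `P(s) ≥ ν`. -/
noncomputable def Pinv (a : ℕ → ℕ) (ν : ℕ) : ℕ := sInf {s : ℕ | ν ≤ Pfun a s}

/-! The rank of a block-diagonal matrix is the sum of the ranks of its blocks, so a set `T` of
thick columns of `G` has rank `∑ b, P |T_b|`, where `T_b` is the part of `T` lying in block `b`.
For a profile that is periodic and nonincreasing within a period, `P` is subadditive, whence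
`rank (G|_T) ≥ P |T|`; filling the blocks one after the other attains `P |T|`. Consequently a
size `ρ` forces rank `≥ K` exactly when `K ≤ P ρ`, which identifies the threshold as
`P^{inv} K`. -/

open Finset Module

theorem LinearMap.finrank_range_piMap {K ι : Type*} [Field K] [Fintype ι] {φ ψ : ι → Type*}
    [∀ i, AddCommGroup (φ i)] [∀ i, Module K (φ i)] [∀ i, Module.Finite K (φ i)]
    [∀ i, AddCommGroup (ψ i)] [∀ i, Module K (ψ i)] (f : ∀ i, φ i →ₗ[K] ψ i) :
    finrank K (LinearMap.range (LinearMap.piMap f)) = ∑ i, finrank K (LinearMap.range (f i)) := by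
  have hfac : LinearMap.piMap f =
      (LinearMap.piMap fun i => (LinearMap.range (f i)).subtype) ∘ₗ
        LinearMap.piMap fun i => (f i).rangeRestrict := rfl
  have hsurj : LinearMap.range (LinearMap.piMap fun i => (f i).rangeRestrict) = ⊤ :=
    LinearMap.range_eq_top.2 <| Function.Surjective.piMap fun i => (f i).surjective_rangeRestrict
  rw [hfac, LinearMap.range_comp_of_range_eq_top _ hsurj,
    LinearMap.finrank_range_of_inj (Function.Injective.piMap fun i => Subtype.val_injective),
    Module.finrank_pi_fintype]

theorem Matrix.rank_blockDiagonal' {K ι : Type*} [Field K] [Fintype ι] [DecidableEq ι]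
    {m n : ι → Type*} [∀ i, Fintype (n i)] (M : ∀ i, Matrix (m i) (n i) K) :
    (Matrix.blockDiagonal' M).rank = ∑ i, (M i).rank := by
  have hconj : (Matrix.blockDiagonal' M).mulVecLin =
      (LinearEquiv.piCurry K fun i (_ : m i) => K).symm.toLinearMap ∘ₗ
        LinearMap.piMap (fun i => (M i).mulVecLin) ∘ₗ
          (LinearEquiv.piCurry K fun i (_ : n i) => K).toLinearMap := by
    ext v ⟨i, r⟩
    simp only [Matrix.mulVecBilin_apply, Matrix.mulVec, dotProduct, ← univ_sigma_univ,
      Matrix.blockDiagonal'_apply, dite_mul, zero_mul, sum_sigma, sum_dite_irrel,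
      sum_const_zero, sum_dite_eq, mem_univ, ↓reduceIte, cast_eq, LinearMap.coe_comp,
      LinearEquiv.coe_coe, LinearMap.coe_piMap, Function.comp_apply, LinearEquiv.piCurry_apply,
      LinearEquiv.piCurry_symm_apply]
    rfl
  rw [Matrix.rank, hconj, LinearMap.range_comp, LinearMap.range_comp, LinearEquiv.range,
    Submodule.map_top, LinearEquiv.finrank_map_eq, LinearMap.finrank_range_piMap]
  rfl

def Finset.prodSlice {ι κ : Type*} [Fintype κ] [DecidableEq ι] [DecidableEq κ]
    (T : Finset (ι × κ)) (i : ι) : Finset κ :=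
  {j | (i, j) ∈ T}

@[simp]
theorem Finset.mem_prodSlice {ι κ : Type*} [Fintype κ] [DecidableEq ι] [DecidableEq κ]
    {T : Finset (ι × κ)} {i : ι} {j : κ} : j ∈ T.prodSlice i ↔ (i, j) ∈ T := by
  simp [prodSlice]

theorem Finset.card_eq_sum_card_prodSlice {ι κ : Type*} [Fintype ι] [Fintype κ] [DecidableEq ι]
    [DecidableEq κ] (T : Finset (ι × κ)) : #T = ∑ i, #(T.prodSlice i) := by
  rw [← filter_univ_mem T, card_filter, Fintype.sum_prod_type]
  simp only [prodSlice, card_filter, filter_univ_mem]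

theorem thickRank_eq_sum_thickRank_prodSlice {K ι R C : Type*} [Field K] [Fintype ι]
    [DecidableEq ι] [Fintype C] [DecidableEq C] {α : ℕ} (B : Matrix R (C × Fin α) K)
    (G : Matrix (ι × R) ((ι × C) × Fin α) K)
    (hG : ∀ b i b' j c, G (b, i) ((b', j), c) = if b = b' then B i (j, c) else 0)
    (T : Finset (ι × C)) :
    thickRank G T = ∑ b, thickRank B (T.prodSlice b) := by
  let e : {p : (ι × C) × Fin α // p.1 ∈ T} ≃
      Σ b, {q : C × Fin α // q.1 ∈ T.prodSlice b} :=
    { toFun p := ⟨p.1.1.1, (p.1.1.2, p.1.2), by simpa using p.2⟩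
      invFun x := ⟨((x.1, x.2.1.1), x.2.1.2), by simpa using x.2.2⟩ }
  have hblock : G.submatrix id (fun p : {p : (ι × C) × Fin α // p.1 ∈ T} => p.1) =
      (Matrix.blockDiagonal' fun b => B.submatrix id fun q : {q // q.1 ∈ T.prodSlice b} => q.1
        ).submatrix (Equiv.sigmaEquivProd ι R).symm e := by
    ext ⟨b, i⟩ ⟨⟨⟨b', j⟩, c⟩, h⟩
    by_cases hb : b = b'
    · subst hb; simp [hG, e]
    · simp [hG, hb, e, Matrix.blockDiagonal'_apply_ne _ _ _ hb]
  rw [thickRank, hblock, Matrix.rank_submatrix, Matrix.rank_blockDiagonal']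
  rfl

section PeriodicProfile

variable {a : ℕ → ℕ} {n : ℕ}

theorem Pfun_mono : Monotone (Pfun a) := fun _ _ h =>
  sum_le_sum_of_subset (range_subset_range.2 h)

theorem Pfun_add (x y : ℕ) : Pfun a (x + y) = Pfun a x + ∑ j ∈ range y, a (x + j) :=
  sum_range_add _ _ _

@[simp]
theorem Pfun_zero : Pfun a 0 = 0 :=
  sum_range_zero a

theorem Pfun_succ (s : ℕ) : Pfun a (s + 1) = Pfun a s + a s :=
  sum_range_succ _ _

theorem Pfun_add_period (hper : ∀ i, a (i + n) = a i) (x : ℕ) :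
    Pfun a (x + n) = Pfun a x + Pfun a n := by
  induction x with
  | zero => simp
  | succ x ih =>
    rw [Nat.add_right_comm, Pfun_succ, ih, hper, Pfun_succ]
    ring

theorem Pfun_mul_add (hper : ∀ i, a (i + n) = a i) (q r : ℕ) :
    Pfun a (q * n + r) = q * Pfun a n + Pfun a r := by
  induction q with
  | zero => simp
  | succ q ih => rw [Nat.succ_mul, Nat.add_right_comm, Pfun_add_period hper, ih]; ring

theorem Pfun_mul (hper : ∀ i, a (i + n) = a i) (q : ℕ) : Pfun a (q * n) = q * Pfun a n := by
  simpa using Pfun_mul_add hper q 0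

theorem Pfun_eq_div_mul_add_mod (hper : ∀ i, a (i + n) = a i) (x : ℕ) :
    Pfun a x = x / n * Pfun a n + Pfun a (x % n) := by
  rw [← Pfun_mul_add hper, Nat.div_add_mod']

theorem Pfun_add_le_of_le (hper : ∀ i, a (i + n) = a i)
    (hmono : ∀ i j, i ≤ j → j < n → a j ≤ a i) {x y : ℕ} (hx : x ≤ n) (hy : y ≤ n) :
    Pfun a (x + y) ≤ Pfun a x + Pfun a y := by
  have window : ∀ {u v w}, u ≤ v → v + w ≤ n →
      ∑ j ∈ range w, a (v + j) ≤ ∑ j ∈ range w, a (u + j) := fun huv hvw =>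
    sum_le_sum fun j hj => hmono _ _ (by omega) (by rw [mem_range] at hj; omega)
  rcases le_or_gt (x + y) n with hxy | hxy
  · rw [Pfun_add]
    simpa [Pfun] using window (Nat.zero_le x) (by omega : x + y ≤ n)
  · -- the block `[x, n)` that completes the first period is dominated by `[x + y - n, y)`
    obtain ⟨m, rfl⟩ : ∃ m, y = m + (n - x) := ⟨x + y - n, by omega⟩
    have hperiod : Pfun a n = Pfun a x + ∑ j ∈ range (n - x), a (x + j) := by
      rw [← Pfun_add, Nat.add_sub_cancel' hx]
    rw [show x + (m + (n - x)) = m + n by omega, Pfun_add_period hper, hperiod, Pfun_add]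
    have := window (by omega : m ≤ x) (by omega : x + (n - x) ≤ n)
    omega

theorem Pfun_add_le (hn : 0 < n) (hper : ∀ i, a (i + n) = a i)
    (hmono : ∀ i j, i ≤ j → j < n → a j ≤ a i) (x y : ℕ) :
    Pfun a (x + y) ≤ Pfun a x + Pfun a y := by
  have hrem := Pfun_add_le_of_le hper hmono (Nat.mod_lt x hn).le (Nat.mod_lt y hn).le
  have hsplit : x + y = (x / n + y / n) * n + (x % n + y % n) := by
    rw [add_mul, add_add_add_comm, Nat.div_add_mod', Nat.div_add_mod']
  rw [hsplit, Pfun_mul_add hper, Pfun_eq_div_mul_add_mod hper x,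
    Pfun_eq_div_mul_add_mod hper y, add_mul]
  linarith

theorem sum_range_min_sub_mul {f : ℕ → ℕ} (h0 : f 0 = 0)
    (hadd : ∀ x, f (x + n) = f x + f n) :
    ∀ {t s : ℕ}, s ≤ t * n → ∑ b ∈ range t, f (min n (s - b * n)) = f s := by
  intro t
  induction t with
  | zero => intro s hs; simp_all
  | succ t ih =>
    intro s hs
    rw [sum_range_succ']
    rcases le_or_gt s n with hsn | hsn
    · have : ∀ b, s - (b + 1) * n = 0 := fun b => by rw [add_mul]; omega
      simp [this, h0, hsn]
    · obtain ⟨s, rfl⟩ : ∃ s', s = s' + n := ⟨s - n, by omega⟩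
      have : ∀ b, s + n - (b + 1) * n = s - b * n := fun b => by rw [add_mul]; omega
      simp only [this, zero_mul, Nat.sub_zero, min_eq_left hsn.le, hadd]
      rw [ih (by rw [add_mul] at hs; omega)]

end PeriodicProfile

section BlockDiagonalOfURA

variable {K R : Type*} [Field K] {a : ℕ → ℕ} {n α t : ℕ}
  {B : Matrix R (Fin n × Fin α) K} {G : Matrix (Fin t × R) ((Fin t × Fin n) × Fin α) K}

theorem thickRank_eq_sum_Pfun (hB : ∀ S : Finset (Fin n), thickRank B S = Pfun a #S)
    (hG : ∀ b i b' j c, G (b, i) ((b', j), c) = if b = b' then B i (j, c) else 0)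
    (T : Finset (Fin t × Fin n)) :
    thickRank G T = ∑ b, Pfun a #(T.prodSlice b) := by
  simp only [thickRank_eq_sum_thickRank_prodSlice B G hG, hB]

theorem Pfun_card_le_thickRank (hn : 0 < n) (hper : ∀ i, a (i + n) = a i)
    (hmono : ∀ i j, i ≤ j → j < n → a j ≤ a i)
    (hB : ∀ S : Finset (Fin n), thickRank B S = Pfun a #S)
    (hG : ∀ b i b' j c, G (b, i) ((b', j), c) = if b = b' then B i (j, c) else 0)
    (T : Finset (Fin t × Fin n)) :
    Pfun a #T ≤ thickRank G T := by
  rw [thickRank_eq_sum_Pfun hB hG, card_eq_sum_card_prodSlice]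
  exact le_sum_of_subadditive _ Pfun_zero.le (Pfun_add_le hn hper hmono) _ _

theorem exists_card_eq_thickRank_eq_Pfun (hper : ∀ i, a (i + n) = a i)
    (hB : ∀ S : Finset (Fin n), thickRank B S = Pfun a #S)
    (hG : ∀ b i b' j c, G (b, i) ((b', j), c) = if b = b' then B i (j, c) else 0)
    {s : ℕ} (hs : s ≤ t * n) :
    ∃ T : Finset (Fin t × Fin n), #T = s ∧ thickRank G T = Pfun a s := by
  let T : Finset (Fin t × Fin n) := {p | p.1 * n + p.2 < s}
  have hslice : ∀ b, #(T.prodSlice b) = min n (s - b * n) := fun b => by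
    have hT : T.prodSlice b = ({j : Fin n | (j : ℕ) < s - b * n} : Finset (Fin n)) := by
      ext j
      simp [T]
      omega
    rw [hT, Fin.card_filter_val_lt]
  refine ⟨T, ?_, ?_⟩
  · rw [card_eq_sum_card_prodSlice]
    simp only [hslice]
    rw [Fin.sum_univ_eq_sum_range (fun b => min n (s - b * n))]
    exact sum_range_min_sub_mul (f := id) rfl (fun _ => rfl) hs
  · rw [thickRank_eq_sum_Pfun hB hG]
    simp only [hslice]
    rw [Fin.sum_univ_eq_sum_range (fun b => Pfun a (min n (s - b * n)))]
    exact sum_range_min_sub_mul Pfun_zero (Pfun_add_period hper) hs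

end BlockDiagonalOfURA

theorem stmt_5_general (nL α t : ℕ) (hnL : 0 < nL)
    (a : ℕ → ℕ) (hper : ∀ i, a (i + nL) = a i)
    (hmono : ∀ i j, i ≤ j → j < nL → a j ≤ a i)
    (Fq : Type*) [Field Fq]
    (B : Matrix (Fin (Pfun a nL)) (Fin nL × Fin α) Fq)
    (hB : ∀ S : Finset (Fin nL), thickRank B S = Pfun a S.card)
    (G : Matrix (Fin t × Fin (Pfun a nL)) ((Fin t × Fin nL) × Fin α) Fq)
    (hG : ∀ b i b' j c, G (b, i) ((b', j), c) = if b = b' then B i (j, c) else 0) :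
    (∀ s : ℕ, s ≤ t * nL →
      (∀ T : Finset (Fin t × Fin nL), T.card = s → Pfun a s ≤ thickRank G T)
      ∧ (∃ T : Finset (Fin t × Fin nL), T.card = s ∧ thickRank G T = Pfun a s))
    ∧ (∀ K : ℕ, 1 ≤ K → K ≤ t * Pfun a nL →
        IsLeast {ρ : ℕ | ∀ T : Finset (Fin t × Fin nL), T.card = ρ → K ≤ thickRank G T}
          (Pinv a K)) := by
  have hlower := Pfun_card_le_thickRank hnL hper hmono hB hG
  have hexists : ∀ s ≤ t * nL,
      ∃ T : Finset (Fin t × Fin nL), #T = s ∧ thickRank G T = Pfun a s :=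
    fun _ hs => exists_card_eq_thickRank_eq_Pfun hper hB hG hs
  refine ⟨fun s hs => ⟨fun T hT => hT ▸ hlower T, hexists s hs⟩, fun K _ hK => ?_⟩
  have hKfull : K ≤ Pfun a (t * nL) := Pfun_mul hper t ▸ hK
  have hthreshold : {ρ : ℕ | ∀ T : Finset (Fin t × Fin nL), #T = ρ → K ≤ thickRank G T} =
      {ρ | K ≤ Pfun a ρ} := by
    ext ρ
    refine ⟨fun h => ?_, fun h T hT => h.trans (hT ▸ hlower T)⟩
    rcases le_or_gt ρ (t * nL) with hρ | hρ
    · obtain ⟨T, hTcard, hTrank⟩ := hexists ρ hρ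
      simpa [hTrank] using h T hTcard
    · exact hKfull.trans (Pfun_mono hρ.le)
  rw [hthreshold]
  exact ⟨Nat.sInf_mem ⟨_, hKfull⟩, fun ρ hρ => Nat.sInf_le hρ⟩

/-- Let `Fq` be a finite field, `nL, α, t` positive integers, and let
`a` be (the period-`nL` periodic extension of) a nonincreasing profile
`a_1 ≥ … ≥ a_{nL} ≥ 0` with `K_L := P(nL) ≥ 1` (here `a` is 0-indexed, so `a i` is
`a_{i+1}`).  Let `B` be a `K_L × (nL·α)` URA matrix over `Fq` with this profile, and let
`G_BASIC` be the block-diagonal matrix with `t` diagonal copies of `B`, its `t·nL` thick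
columns of width `α` being those of the copies of `B`.  Then for every `0 ≤ s ≤ t·nL`, the
minimum of `rank (G_BASIC|_T)` over all subsets `T` of `s` thick columns equals `P(s)`.
Equivalently, for every `1 ≤ K ≤ t·K_L`, the smallest integer `ρ` such that every set of
`ρ` thick columns of `G_BASIC` has rank at least `K` is `ρ = P^{inv}(K)`. -/
theorem stmt_5 (nL α t : ℕ) (hnL : 0 < nL) (hα : 0 < α) (ht : 0 < t)
    (a : ℕ → ℕ) (hper : ∀ i, a (i + nL) = a i)
    (hmono : ∀ i j, i ≤ j → j < nL → a j ≤ a i)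
    (hKL : 1 ≤ Pfun a nL)
    (Fq : Type*) [Field Fq] [Fintype Fq]
    (B : Matrix (Fin (Pfun a nL)) (Fin nL × Fin α) Fq)
    (hB : ∀ S : Finset (Fin nL), thickRank B S = Pfun a S.card)
    (G : Matrix (Fin t × Fin (Pfun a nL)) ((Fin t × Fin nL) × Fin α) Fq)
    (hG : ∀ b i b' j c, G (b, i) ((b', j), c) = if b = b' then B i (j, c) else 0) :
    (∀ s : ℕ, s ≤ t * nL →
      (∀ T : Finset (Fin t × Fin nL), T.card = s → Pfun a s ≤ thickRank G T)
      ∧ (∃ T : Finset (Fin t × Fin nL), T.card = s ∧ thickRank G T = Pfun a s))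
    ∧ (∀ K : ℕ, 1 ≤ K → K ≤ t * Pfun a nL →
        IsLeast {ρ : ℕ | ∀ T : Finset (Fin t × Fin nL), T.card = ρ → K ≤ thickRank G T}
          (Pinv a K)) :=
  stmt_5_general nL α t hnL a hper hmono Fq B hB G hG
end

section
/- Let r, α, β, n_L be positive integers with n_L ≥ r and α ≥ (r−1)β, and let (a_j) be the MBR rank accumulation profile with parameters (r, α, β, n_L), extended periodically with period n_L, so that K_L = P(n_L) = αr − C(r,2)β. Then for all integers v_1 ≥ 0 and 1 ≤ v_0 ≤ K_L, P^{inv}(v_1·K_L + v_0) = v_1·n_L + ν, where ν is the unique integer with 1 ≤ ν ≤ r satisfying α(ν−1) − C(ν−1,2)β < v_0 ≤ αν − C(ν,2)β. -/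
/-!
Since the profile is periodic, `P(k n_L + t) = k K_L + P(t)`, so `P^{inv}(k K_L + v₀)` is
`k n_L + P^{inv}(v₀)`. On `[0, r]` the partial sums are `P(ν) = αν - C(ν,2)β`, and
`P^{inv}(v₀) = ν` says exactly that `P(ν - 1) < v₀ ≤ P(ν)`, which gives both the
existence and the uniqueness of `ν`.
-/

namespace Pfun

variable {a : ℕ → ℕ}

theorem succ (a : ℕ → ℕ) (s : ℕ) : Pfun a (s + 1) = Pfun a s + a s :=
  Finset.sum_range_succ a s

theorem monotone (a : ℕ → ℕ) : Monotone (Pfun a) := fun _ _ h =>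
  Finset.sum_le_sum_of_subset (Finset.range_subset_range.2 h)

theorem eq_of_eq_zero {s t : ℕ} (hst : s ≤ t) (h : ∀ i, s ≤ i → i < t → a i = 0) :
    Pfun a t = Pfun a s := by
  have hzero : ∑ i ∈ Finset.Ico s t, a i = 0 :=
    Finset.sum_eq_zero fun i hi => h i (Finset.mem_Ico.1 hi).1 (Finset.mem_Ico.1 hi).2
  unfold Pfun
  rw [← Finset.sum_range_add_sum_Ico a hst, hzero, add_zero]

theorem period_add {n : ℕ} (hper : Function.Periodic a n) (t : ℕ) :
    Pfun a (n + t) = Pfun a n + Pfun a t := by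
  unfold Pfun
  rw [Finset.sum_range_add]
  exact congrArg _ (Finset.sum_congr rfl fun i _ => by rw [add_comm]; exact hper i)

theorem mul_add {n : ℕ} (hper : Function.Periodic a n) (k t : ℕ) :
    Pfun a (k * n + t) = k * Pfun a n + Pfun a t := by
  induction k with
  | zero => simp
  | succ k ih =>
    rw [add_mul, one_mul, add_comm (k * n), add_assoc, period_add hper, ih]
    ring

end Pfun

namespace Pinv

variable {a : ℕ → ℕ} {ν : ℕ}

theorem le_of_le_Pfun {t : ℕ} (h : ν ≤ Pfun a t) : Pinv a ν ≤ t :=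
  Nat.sInf_le h

theorem eq_succ_iff (s : ℕ) : Pinv a ν = s + 1 ↔ ν ≤ Pfun a (s + 1) ∧ Pfun a s < ν := by
  rw [Pinv, Nat.sInf_upward_closed_eq_succ_iff
    (fun _ _ hk h => h.trans (Pfun.monotone a hk)) s]
  simp only [Set.mem_ofPred_eq, not_le]

theorem pos {t : ℕ} (h0 : 0 < ν) (h : ν ≤ Pfun a t) : 0 < Pinv a ν := by
  refine Nat.pos_of_ne_zero fun hzero => ?_
  rcases Nat.sInf_eq_zero.1 hzero with hmem | hempty
  · exact (Nat.lt_irrefl 0) (h0.trans_le hmem)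
  · exact hempty.subset (show t ∈ {s | ν ≤ Pfun a s} from h)

theorem mul_add {n : ℕ} (hper : Function.Periodic a n) (k : ℕ) (h0 : 0 < ν)
    (h : ν ≤ Pfun a n) : Pinv a (k * Pfun a n + ν) = k * n + Pinv a ν := by
  obtain ⟨s, hs⟩ := Nat.exists_eq_add_of_lt (pos h0 h)
  rw [zero_add] at hs
  obtain ⟨hle, hlt⟩ := (eq_succ_iff s).1 hs
  rw [hs, ← add_assoc, eq_succ_iff, add_assoc, Pfun.mul_add hper, Pfun.mul_add hper]
  omega

end Pinv

/-- The MBR rank accumulation profile, 0-indexed and extended with period `nL`. -/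
def mbrProfile (r α β nL i : ℕ) : ℕ := if i % nL < r then α - i % nL * β else 0

section mbrProfile

variable {r α β nL : ℕ}

theorem mbrProfile_periodic : Function.Periodic (mbrProfile r α β nL) nL := fun i => by
  simp only [mbrProfile, Nat.add_mod_right]

theorem mbrProfile_of_lt {i : ℕ} (hnLr : r ≤ nL) (hi : i < r) :
    mbrProfile r α β nL i = α - i * β := by
  rw [mbrProfile, Nat.mod_eq_of_lt (hi.trans_le hnLr), if_pos hi]

theorem mbrProfile_of_le {i : ℕ} (hri : r ≤ i) (hi : i < nL) : mbrProfile r α β nL i = 0 := by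
  rw [mbrProfile, Nat.mod_eq_of_lt hi, if_neg (Nat.not_lt.2 hri)]

theorem Pfun_mbrProfile_add_choose (hnLr : r ≤ nL) (hαβ : (r - 1) * β ≤ α) {ν : ℕ}
    (hν : ν ≤ r) : Pfun (mbrProfile r α β nL) ν + ν.choose 2 * β = α * ν := by
  induction ν with
  | zero => simp [Pfun]
  | succ ν ih =>
    have hνβ : ν * β ≤ α := (Nat.mul_le_mul_right β (by omega)).trans hαβ
    have hsum := ih (by omega)
    rw [Pfun.succ, mbrProfile_of_lt hnLr (by omega), Nat.choose_succ_succ',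
      Nat.choose_one_right]
    zify [hνβ] at hsum ⊢
    linear_combination hsum

theorem Pfun_mbrProfile (hnLr : r ≤ nL) (hαβ : (r - 1) * β ≤ α) {ν : ℕ} (hν : ν ≤ r) :
    Pfun (mbrProfile r α β nL) ν = α * ν - ν.choose 2 * β :=
  Nat.eq_sub_of_add_eq (Pfun_mbrProfile_add_choose hnLr hαβ hν)

theorem Pfun_mbrProfile_period (hnLr : r ≤ nL) (hαβ : (r - 1) * β ≤ α) :
    Pfun (mbrProfile r α β nL) nL = α * r - r.choose 2 * β := by
  rw [Pfun.eq_of_eq_zero hnLr fun _ => mbrProfile_of_le, Pfun_mbrProfile hnLr hαβ le_rfl]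

theorem Pinv_mbrProfile_eq_iff (hnLr : r ≤ nL) (hαβ : (r - 1) * β ≤ α) {v0 ν : ℕ}
    (h1 : 1 ≤ ν) (hν : ν ≤ r) :
    Pinv (mbrProfile r α β nL) v0 = ν ↔
      α * (ν - 1) - (ν - 1).choose 2 * β < v0 ∧ v0 ≤ α * ν - ν.choose 2 * β := by
  obtain ⟨s, rfl⟩ := Nat.exists_eq_add_of_le' h1
  rw [Pinv.eq_succ_iff, Nat.add_sub_cancel, ← Pfun_mbrProfile hnLr hαβ hν,
    ← Pfun_mbrProfile hnLr hαβ (by omega), and_comm]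

end mbrProfile

theorem stmt_7_general (r α β nL : ℕ)
    (hnLr : r ≤ nL) (hαβ : (r - 1) * β ≤ α)
    (a : ℕ → ℕ)
    (ha : ∀ i, a i = if i % nL < r then α - (i % nL) * β else 0) :
    Pfun a nL = α * r - Nat.choose r 2 * β
    ∧ (∀ v1 v0 : ℕ, 1 ≤ v0 → v0 ≤ α * r - Nat.choose r 2 * β →
      (∃! ν : ℕ, 1 ≤ ν ∧ ν ≤ r
          ∧ α * (ν - 1) - Nat.choose (ν - 1) 2 * β < v0
          ∧ v0 ≤ α * ν - Nat.choose ν 2 * β)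
      ∧ (∀ ν : ℕ, 1 ≤ ν → ν ≤ r →
          α * (ν - 1) - Nat.choose (ν - 1) 2 * β < v0 →
          v0 ≤ α * ν - Nat.choose ν 2 * β →
          Pinv a (v1 * (α * r - Nat.choose r 2 * β) + v0) = v1 * nL + ν)) := by
  obtain rfl : a = mbrProfile r α β nL := funext ha
  have hK := Pfun_mbrProfile_period hnLr hαβ
  refine ⟨hK, fun v1 v0 hv0 hv0K => ?_⟩
  have hv0r : v0 ≤ Pfun (mbrProfile r α β nL) r := by rwa [Pfun_mbrProfile hnLr hαβ le_rfl]
  have hPinv_pos := Pinv.pos hv0 hv0r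
  have hPinv_le := Pinv.le_of_le_Pfun hv0r
  refine ⟨⟨_, ⟨hPinv_pos, hPinv_le,
    (Pinv_mbrProfile_eq_iff hnLr hαβ hPinv_pos hPinv_le).1 rfl⟩, ?_⟩, ?_⟩
  · rintro ν ⟨h1, hν, hcond⟩
    exact ((Pinv_mbrProfile_eq_iff hnLr hαβ h1 hν).2 hcond).symm
  · intro ν h1 hν hlt hle
    rw [← hK, Pinv.mul_add mbrProfile_periodic v1 hv0 (by rwa [hK]),
      (Pinv_mbrProfile_eq_iff hnLr hαβ h1 hν).2 ⟨hlt, hle⟩]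

/-- Let `r, α, β, nL` be positive integers with `nL ≥ r` and
`α ≥ (r-1)β`, and let `a` be the MBR rank accumulation profile with parameters
`(r, α, β, nL)` extended periodically with period `nL` (0-indexed:
`a i = α - (i % nL)·β` if `i % nL < r`, and `a i = 0` otherwise), so that
`K_L = P(nL) = αr - C(r,2)β`.  Then for all integers `v_1 ≥ 0` and `1 ≤ v_0 ≤ K_L`,
`P^{inv}(v_1·K_L + v_0) = v_1·nL + ν`, where `ν` is the unique integer with `1 ≤ ν ≤ r`
satisfying `α(ν-1) - C(ν-1,2)β < v_0 ≤ αν - C(ν,2)β`. -/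
theorem stmt_7 (r α β nL : ℕ) (hr : 0 < r) (hα : 0 < α) (hβ : 0 < β)
    (hnLr : r ≤ nL) (hαβ : (r - 1) * β ≤ α)
    (a : ℕ → ℕ)
    (ha : ∀ i, a i = if i % nL < r then α - (i % nL) * β else 0) :
    Pfun a nL = α * r - Nat.choose r 2 * β
    ∧ (∀ v1 v0 : ℕ, 1 ≤ v0 → v0 ≤ α * r - Nat.choose r 2 * β →
      (∃! ν : ℕ, 1 ≤ ν ∧ ν ≤ r
          ∧ α * (ν - 1) - Nat.choose (ν - 1) 2 * β < v0
          ∧ v0 ≤ α * ν - Nat.choose ν 2 * β)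
      ∧ (∀ ν : ℕ, 1 ≤ ν → ν ≤ r →
          α * (ν - 1) - Nat.choose (ν - 1) 2 * β < v0 →
          v0 ≤ α * ν - Nat.choose ν 2 * β →
          Pinv a (v1 * (α * r - Nat.choose r 2 * β) + v0) = v1 * nL + ν)) :=
  stmt_7_general r α β nL hnLr hαβ a ha
end

section
/- Let (X, B_1,…,B_b) be a t-(n, w, λ) design in which every point lies in exactly λ_1 blocks, let u_s (1 ≤ s ≤ t, u_0 := 0) denote the common value of |N_{x_1} ∪ … ∪ N_{x_s}| over all choices of s distinct points, let F_q be a finite field, let M be a K_L × b matrix over F_q with the MDS property, and suppose there exists an integer k ≤ t with u_{k−1} < K_L ≤ u_k. Define the K_L × (n·λ_1) matrix B_FR whose thick column (of width λ_1) associated with point x ∈ X consists of the λ_1 columns of M indexed by N_x, in some fixed order. Then B_FR is a uniform-rank-accumulation matrix: for every 0 ≤ s ≤ n and every set of s thick columns, the rank of the corresponding submatrix equals ρ_s, where ρ_s := min(u_s, K_L) for s ≤ t and ρ_s := K_L for t < s ≤ n. Moreover, the increment profile a_s := ρ_s − ρ_{s−1} (1 ≤ s ≤ n) is nonincreasing and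 satisfies ρ_n = a_1 + … + a_n = K_L. -/
/-- The rank of the submatrix of `M` formed by the columns indexed by `T`. -/
noncomputable def colRank {𝔽 : Type*} [Field 𝔽] {R b : ℕ}
    (M : Matrix (Fin R) (Fin b) 𝔽) (T : Finset (Fin b)) : ℕ :=
  (M.submatrix id (fun j : T => (j : Fin b))).rank

/-!
Each thick column of `B_FR` is a set of columns of `M`, namely those of the blocks through a
point, so a set `S` of thick columns spans the columns of `M` indexed by `⋃_{x ∈ S} N_x` and,
by the MDS property, has rank `min (|⋃_{x ∈ S} N_x|) K_L`. This is `min (u |S|) K_L` when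
`|S| ≤ t`, and `K_L` otherwise because `K_L ≤ u k ≤ u t`. The profile `u` is nondecreasing, and
concave since `|A ∪ N_x ∪ N_y| + |A| ≤ |A ∪ N_x| + |A ∪ N_y|`; truncating it at `K_L` and
freezing it after `t` keeps both properties, which gives the claims on the increments.
-/

open Finset

section Rank

variable {K : Type*} [Field K]

theorem Matrix.rank_submatrix_id_eq_of_range_eq {m n ι ι' : Type*} [Fintype ι] [Fintype ι']
    (M : Matrix m n K) {f : ι → n} {g : ι' → n}
    (h : Set.range f = Set.range g) :
    (M.submatrix id f).rank = (M.submatrix id g).rank := by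
  rw [Matrix.rank_eq_finrank_span_cols, Matrix.rank_eq_finrank_span_cols]
  change Module.finrank K (Submodule.span K (Set.range (M.col ∘ f))) =
    Module.finrank K (Submodule.span K (Set.range (M.col ∘ g)))
  rw [Set.range_comp, Set.range_comp, h]

theorem thickRank_eq_colRank_biUnion {R b α : ℕ} {C : Type*} [Fintype C] [DecidableEq C]
    (M : Matrix (Fin R) (Fin b) K) (G : Matrix (Fin R) (C × Fin α) K)
    (ν : C → Fin α → Fin b) (hG : ∀ i x c, G i (x, c) = M i (ν x c)) (S : Finset C) :
    thickRank G S = colRank M (S.biUnion fun x => univ.image (ν x)) := by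
  have hsub : G.submatrix id (fun p : {p : C × Fin α // p.1 ∈ S} => (p : C × Fin α)) =
      M.submatrix id (fun p : {p : C × Fin α // p.1 ∈ S} => ν p.1.1 p.1.2) := by
    ext i p
    exact hG i p.1.1 p.1.2
  rw [thickRank, colRank, hsub]
  apply Matrix.rank_submatrix_id_eq_of_range_eq
  ext j
  simp

end Rank

section UnionProfile

variable {X ι : Type*} [DecidableEq ι]

def HasUnionProfile (N : X → Finset ι) (t : ℕ) (u : ℕ → ℕ) : Prop :=
  ∀ E : Finset X, #E ≤ t → #(E.biUnion N) = u #E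

theorem Finset.card_union_union_add_card_le (A B C : Finset ι) :
    #(B ∪ (C ∪ A)) + #A ≤ #(B ∪ A) + #(C ∪ A) := by
  have hunion : (B ∪ A) ∪ (C ∪ A) = B ∪ (C ∪ A) := by
    ext; simp only [mem_union]; tauto
  have hinter : A ⊆ (B ∪ A) ∩ (C ∪ A) := subset_inter subset_union_right subset_union_right
  have := card_union_add_card_inter (B ∪ A) (C ∪ A)
  rw [hunion] at this
  have := card_le_card hinter
  omega

namespace HasUnionProfile

variable {N : X → Finset ι} {t : ℕ} {u : ℕ → ℕ}

theorem monotoneOn [Fintype X] (h : HasUnionProfile N t u) (ht : t ≤ Fintype.card X) :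
    MonotoneOn u (Set.Iic t) := by
  intro s₁ hs₁ s₂ hs₂ hs
  obtain ⟨E₂, -, hE₂⟩ :=
    exists_subset_card_eq (s := univ) (n := s₂) (by simpa using hs₂.out.trans ht)
  obtain ⟨E₁, hE₁₂, hE₁⟩ := exists_subset_card_eq (hE₂ ▸ hs)
  rw [← hE₁, ← hE₂, ← h E₁ (hE₁ ▸ hs.trans hs₂), ← h E₂ (hE₂ ▸ hs₂)]
  exact card_le_card (biUnion_subset_biUnion_of_subset_left N hE₁₂)

theorem add_le_two_mul [Fintype X] [DecidableEq X] (h : HasUnionProfile N t u)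
    (ht : t ≤ Fintype.card X) {s : ℕ} (hs : s + 2 ≤ t) :
    u (s + 2) + u s ≤ 2 * u (s + 1) := by
  obtain ⟨E, -, hE⟩ :=
    exists_subset_card_eq (s := univ) (n := s + 2) (by simpa using hs.trans ht)
  obtain ⟨x, E', hxE', rfl, hE'⟩ := card_eq_succ.mp hE
  obtain ⟨y, F, hyF, rfl, hF⟩ := card_eq_succ.mp hE'
  have hxF : x ∉ F := fun hx => hxE' (mem_insert_of_mem hx)
  have hxF_card : #(insert x F) = s + 1 := by rw [card_insert_of_notMem hxF, hF]
  have hxy := h _ (hE ▸ hs)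
  have hx := h _ (hxF_card ▸ (by omega : s + 1 ≤ t))
  have hy := h _ (hE' ▸ (by omega : s + 1 ≤ t))
  have h0 := h _ (hF ▸ (by omega : s ≤ t))
  rw [hE] at hxy
  rw [hxF_card] at hx
  rw [hE'] at hy
  rw [hF] at h0
  simp only [biUnion_insert] at hxy hx hy
  have := card_union_union_add_card_le (F.biUnion N) (N x) (N y)
  omega

theorem le_card_biUnion (h : HasUnionProfile N t u) {S : Finset X} (hS : t ≤ #S) :
    u t ≤ #(S.biUnion N) := by
  obtain ⟨E, hES, hE⟩ := exists_subset_card_eq hS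
  rw [← hE, ← h E hE.le]
  exact card_le_card (biUnion_subset_biUnion_of_subset_left N hES)

end HasUnionProfile

end UnionProfile

section TruncProfile

def truncProfile (u : ℕ → ℕ) (t K s : ℕ) : ℕ :=
  if s ≤ t then min (u s) K else K

variable {u : ℕ → ℕ} {t K : ℕ}

theorem truncProfile_of_le (hK : K ≤ u t) {s : ℕ} (hs : t ≤ s) :
    truncProfile u t K s = K := by
  unfold truncProfile
  split_ifs with h
  · obtain rfl : s = t := le_antisymm h hs
    exact min_eq_right hK
  · rfl

theorem truncProfile_monotone (hmono : MonotoneOn u (Set.Iic t)) (hK : K ≤ u t) :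
    Monotone (truncProfile u t K) := by
  refine monotone_nat_of_le_succ fun s => ?_
  by_cases hs : s + 1 ≤ t
  · have := hmono (show s ≤ t by omega) hs s.le_succ
    simp only [truncProfile, hs, show s ≤ t by omega, if_true]
    omega
  · rw [truncProfile_of_le hK (by omega : t ≤ s), truncProfile_of_le hK (by omega : t ≤ s + 1)]

theorem truncProfile_sub_le (hmono : MonotoneOn u (Set.Iic t))
    (hconc : ∀ s, s + 2 ≤ t → u (s + 2) + u s ≤ 2 * u (s + 1)) (hK : K ≤ u t) {s : ℕ}
    (hs : 1 ≤ s) :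
    truncProfile u t K (s + 1) - truncProfile u t K s ≤
      truncProfile u t K s - truncProfile u t K (s - 1) := by
  obtain ⟨r, rfl⟩ : ∃ r, s = r + 1 := ⟨s - 1, by omega⟩
  rw [Nat.add_sub_cancel]
  by_cases hr : r + 2 ≤ t
  · have h₁ := hmono (show r ≤ t by omega) (show r + 1 ≤ t by omega) r.le_succ
    have h₂ := hmono (show r + 1 ≤ t by omega) hr (r + 1).le_succ
    have h₃ := hconc r hr
    rw [show r + 1 + 1 = r + 2 from rfl]
    simp only [truncProfile, hr, show r ≤ t by omega, show r + 1 ≤ t by omega, if_true]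
    omega
  · have := truncProfile_monotone hmono hK (show r ≤ r + 1 by omega)
    rw [truncProfile_of_le hK (by omega : t ≤ r + 1 + 1)]
    by_cases hr' : t ≤ r + 1
    · rw [truncProfile_of_le hK hr']
      omega
    · omega

theorem HasUnionProfile.min_card_biUnion_eq_truncProfile {X ι : Type*} [DecidableEq ι]
    {N : X → Finset ι} (h : HasUnionProfile N t u) (hK : K ≤ u t) (S : Finset X) :
    min #(S.biUnion N) K = truncProfile u t K #S := by
  by_cases hS : #S ≤ t
  · rw [truncProfile, if_pos hS, h S hS]
  · rw [truncProfile_of_le hK (by omega)]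
    exact min_eq_right (hK.trans (h.le_card_biUnion (by omega)))

end TruncProfile

theorem stmt_14_general (npts w t b KL lam1 : ℕ)
    (hwt : t ≤ w) (hnw : w < npts)
    (X : Type*) [Fintype X] [DecidableEq X] (hX : Fintype.card X = npts)
    (Bl : Fin b → Finset X)
    (hlam1 : ∀ x : X, (Finset.univ.filter fun j => x ∈ Bl j).card = lam1)
    (u : ℕ → ℕ) (hu0 : u 0 = 0)
    (hu : ∀ s, 1 ≤ s → s ≤ t → ∀ E : Finset X, E.card = s →
      (Finset.univ.filter fun j => ∃ x ∈ E, x ∈ Bl j).card = u s)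
    (Fq : Type*) [Field Fq]
    (M : Matrix (Fin KL) (Fin b) Fq)
    (hMDS : ∀ T : Finset (Fin b), colRank M T = min T.card KL)
    (k : ℕ) (hk : k ≤ t) (hle : KL ≤ u k)
    (ν : X → Fin lam1 → Fin b)
    (hν_inj : ∀ x, Function.Injective (ν x))
    (hν_mem : ∀ x c, x ∈ Bl (ν x c))
    (BFR : Matrix (Fin KL) (X × Fin lam1) Fq)
    (hBFR : ∀ i x c, BFR i (x, c) = M i (ν x c))
    (ρ : ℕ → ℕ) (hρ : ∀ s, ρ s = if s ≤ t then min (u s) KL else KL) :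
    (∀ S : Finset X, thickRank BFR S = ρ S.card)
    ∧ (∀ s, 1 ≤ s → s + 1 ≤ npts → ρ (s + 1) - ρ s ≤ ρ s - ρ (s - 1))
    ∧ ρ npts = KL
    ∧ (∑ s ∈ Finset.range npts, (ρ (s + 1) - ρ s)) = KL := by
  set N : X → Finset (Fin b) := fun x => univ.filter fun j => x ∈ Bl j
  have hN : (fun x => univ.image (ν x)) = N := funext fun x =>
    eq_of_subset_of_card_le (by simp [N, subset_iff, hν_mem])
      (by rw [hlam1, card_image_of_injective _ (hν_inj x), card_univ, Fintype.card_fin])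
  have hprof : HasUnionProfile N t u := by
    intro E hE
    rcases E.eq_empty_or_nonempty with rfl | hne
    · simp [hu0]
    · rw [← hu _ hne.card_pos hE E rfl]
      congr 1
      ext
      simp [N]
  have htX : t ≤ Fintype.card X := by omega
  have hmono := hprof.monotoneOn htX
  have hK : KL ≤ u t := hle.trans (hmono hk Set.self_mem_Iic hk)
  obtain rfl : ρ = truncProfile u t KL := funext hρ
  refine ⟨fun S => ?_, fun s hs _ => truncProfile_sub_le hmono
    (fun _ => hprof.add_le_two_mul htX) hK hs, truncProfile_of_le hK (by omega), ?_⟩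
  · rw [thickRank_eq_colRank_biUnion M BFR ν hBFR, hN, hMDS,
      hprof.min_card_biUnion_eq_truncProfile hK]
  · rw [sum_range_tsub (truncProfile_monotone hmono hK), truncProfile_of_le hK (by omega)]
    simp [truncProfile, hu0]

/-- Let `(X, B_1,…,B_b)` be a `t`-`(n, w, λ)` design in which every
point lies in exactly `λ_1` blocks, let `u s` (`1 ≤ s ≤ t`, `u 0 = 0`) denote the common
value of `|N_{x_1} ∪ … ∪ N_{x_s}|` over all choices of `s` distinct points, let `Fq` be a
finite field, let `M` be a `K_L × b` matrix over `Fq` with the MDS property, and suppose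
there is `k ≤ t` with `u (k-1) < K_L ≤ u k`.  Define the `K_L × (n·λ_1)` matrix `B_FR`
whose thick column (of width `λ_1`) associated with a point `x` consists of the `λ_1`
columns of `M` indexed by `N_x`, in some fixed order (given by `ν`).  Then `B_FR` is a
uniform-rank-accumulation matrix: the rank of any set of `s` thick columns equals `ρ s`,
where `ρ s = min (u s) K_L` for `s ≤ t` and `ρ s = K_L` for `t < s ≤ n`.  Moreover the
increment profile `a_s := ρ s - ρ (s-1)` is nonincreasing and sums to `ρ n = K_L`. -/
theorem stmt_14 (npts w t lam b KL lam1 : ℕ)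
    (ht : 1 ≤ t) (hwt : t ≤ w) (hnw : w < npts) (hlam : 1 ≤ lam)
    (X : Type*) [Fintype X] [DecidableEq X] (hX : Fintype.card X = npts)
    (Bl : Fin b → Finset X) (hw : ∀ j, (Bl j).card = w)
    (hdesign : ∀ T : Finset X, T.card = t →
      (Finset.univ.filter fun j => T ⊆ Bl j).card = lam)
    (hlam1 : ∀ x : X, (Finset.univ.filter fun j => x ∈ Bl j).card = lam1)
    (u : ℕ → ℕ) (hu0 : u 0 = 0)
    (hu : ∀ s, 1 ≤ s → s ≤ t → ∀ E : Finset X, E.card = s →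
      (Finset.univ.filter fun j => ∃ x ∈ E, x ∈ Bl j).card = u s)
    (Fq : Type*) [Field Fq] [Fintype Fq]
    (M : Matrix (Fin KL) (Fin b) Fq)
    (hMDS : ∀ T : Finset (Fin b), colRank M T = min T.card KL)
    (k : ℕ) (hk : k ≤ t) (hlt : u (k - 1) < KL) (hle : KL ≤ u k)
    (ν : X → Fin lam1 → Fin b)
    (hν_inj : ∀ x, Function.Injective (ν x))
    (hν_mem : ∀ x c, x ∈ Bl (ν x c))
    (BFR : Matrix (Fin KL) (X × Fin lam1) Fq)
    (hBFR : ∀ i x c, BFR i (x, c) = M i (ν x c))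
    (ρ : ℕ → ℕ) (hρ : ∀ s, ρ s = if s ≤ t then min (u s) KL else KL) :
    (∀ S : Finset X, thickRank BFR S = ρ S.card)
    ∧ (∀ s, 1 ≤ s → s + 1 ≤ npts → ρ (s + 1) - ρ s ≤ ρ s - ρ (s - 1))
    ∧ ρ npts = KL
    ∧ (∑ s ∈ Finset.range npts, (ρ (s + 1) - ρ s)) = KL :=
  stmt_14_general npts w t b KL lam1 hwt hnw X hX Bl hlam1 u hu0 hu Fq M hMDS k hk hle ν hν_inj
    hν_mem BFR hBFR ρ hρ
end
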